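/- arXiv:2207.07916 — 2 statements merged into one kernel-verified Lean document; each statement's English description precedes it below -/
import Mathlib

section
/- For a discrete random variable X with finite support and any m ≥ 1, there exists a random variable X' with support of size at most m minimizing the Kolmogorov distance d_K(X,X') among all random variables with support size at most m; moreover this minimum distance is achieved by some X' whose support is contained in the support of X. -/
/-!
Push a competitor `Y` forward along the map sending each point to the least point of `supp X`
at or above it (and points beyond `max (supp X)` to that maximum). This keeps `F_Y` at every
point of `supp X` below the maximum, gives `1 = F_X` at the maximum, and does not enlarge the
support. For variables supported in `supp X` the Kolmogorov distance is the largest CDF gap at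
the points of `supp X`, so the pushforward is at least as close to `X`. It therefore suffices to
minimise over weight vectors on `supp X` with at most `m` nonzero entries: a compact set, on which
`d_K` is a continuous function of the weights.
-/

open scoped Classical

/-- A finitely supported discrete random variable on ℝ, given by its
probability mass function. -/
structure DRV where
  f : ℝ →₀ ℝ
  nonneg : ∀ x, 0 ≤ f x
  sum_one : f.sum (fun _ p => p) = 1

/-- The cumulative distribution function `F_X(t) = Pr(X ≤ t)`. -/
noncomputable def DRV.cdf (X : DRV) (t : ℝ) : ℝ :=
  ∑ x ∈ X.f.support.filter (· ≤ t), X.f x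

/-- The Kolmogorov distance `d_K(X,X') = sup_t |F_X(t) - F_{X'}(t)|`. -/
noncomputable def dK (X Y : DRV) : ℝ := ⨆ t : ℝ, |X.cdf t - Y.cdf t|

/-- The size of the support of a random variable. -/
def DRV.suppSize (X : DRV) : ℕ := X.f.support.card

open Finset

lemma isClosed_setOf_card_filter_ne_zero_le {ι M : Type*} [Fintype ι] [TopologicalSpace M]
    [Zero M] [T1Space M] (m : ℕ) : IsClosed {g : ι → M | #{i | g i ≠ 0} ≤ m} := by
  have hunion : {g : ι → M | #{i | g i ≠ 0} ≤ m} =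
      ⋃ T ∈ {T : Finset ι | #T ≤ m}, ⋂ i ∈ Tᶜ, (fun g : ι → M => g i) ⁻¹' {0} := by
    ext g
    simp only [Set.mem_ofPred_eq, Set.mem_iUnion, Set.mem_iInter, Set.mem_preimage,
      Set.mem_singleton_iff, mem_compl, exists_prop]
    constructor
    · exact fun h => ⟨_, h, fun i hi => by simpa using hi⟩
    · rintro ⟨T, hT, hg⟩
      refine le_trans (card_le_card fun i hi => ?_) hT
      by_contra hiT
      exact (mem_filter.1 hi).2 (hg i hiT)
  rw [hunion]
  exact (Set.toFinite _).isClosed_biUnion fun T _ =>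
    isClosed_biInter fun i _ => isClosed_singleton.preimage (continuous_apply i)

namespace DRV

variable (W : DRV) {S : Finset ℝ}

lemma sum_support_eq_one : ∑ x ∈ W.f.support, W.f x = 1 := W.sum_one

lemma support_nonempty : W.f.support.Nonempty := by
  rw [Finsupp.support_nonempty_iff]
  intro h
  simpa [h] using W.sum_one

lemma cdf_eq_sum_of_support_subset (hW : W.f.support ⊆ S) (t : ℝ) :
    W.cdf t = ∑ x ∈ S with x ≤ t, W.f x :=
  sum_subset (filter_subset_filter _ hW) fun x hx hnx => by
    by_contra h
    exact hnx (mem_filter.2 ⟨Finsupp.mem_support_iff.2 h, (mem_filter.1 hx).2⟩)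

lemma cdf_nonneg (t : ℝ) : 0 ≤ W.cdf t := sum_nonneg fun x _ => W.nonneg x

lemma cdf_le_one (t : ℝ) : W.cdf t ≤ 1 :=
  W.sum_support_eq_one ▸
    sum_le_sum_of_subset_of_nonneg (filter_subset _ _) fun x _ _ => W.nonneg x

lemma cdf_eq_one {t : ℝ} (h : ∀ x ∈ W.f.support, x ≤ t) : W.cdf t = 1 := by
  rw [DRV.cdf, filter_true_of_mem h, sum_support_eq_one]

lemma cdf_eq_zero (hW : W.f.support ⊆ S) {t : ℝ} (h : S.filter (· ≤ t) = ∅) : W.cdf t = 0 := by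
  rw [cdf_eq_sum_of_support_subset W hW, h, sum_empty]

lemma cdf_eq_cdf_max' (hW : W.f.support ⊆ S) {t : ℝ} (h : (S.filter (· ≤ t)).Nonempty) :
    W.cdf t = W.cdf ((S.filter (· ≤ t)).max' h) := by
  have hmax := (mem_filter.1 (max'_mem _ h)).2
  rw [cdf_eq_sum_of_support_subset W hW, cdf_eq_sum_of_support_subset W hW]
  refine sum_congr (filter_congr fun x hx => ⟨fun hxt => ?_, fun hxm => hxm.trans hmax⟩)
    fun _ _ => rfl
  exact le_max' _ x (mem_filter.2 ⟨hx, hxt⟩)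

end DRV

open DRV

lemma abs_sub_cdf_le_one (X Y : DRV) (t : ℝ) : |X.cdf t - Y.cdf t| ≤ 1 := by
  have := X.cdf_nonneg t; have := Y.cdf_nonneg t
  have := X.cdf_le_one t; have := Y.cdf_le_one t
  exact abs_sub_le_iff.2 ⟨by linarith, by linarith⟩

lemma abs_sub_cdf_le_dK (X Y : DRV) (t : ℝ) : |X.cdf t - Y.cdf t| ≤ dK X Y :=
  le_ciSup ⟨1, Set.forall_mem_range.2 (abs_sub_cdf_le_one X Y)⟩ t

lemma dK_nonneg (X Y : DRV) : 0 ≤ dK X Y := (abs_nonneg _).trans (abs_sub_cdf_le_dK X Y 0)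

lemma dK_eq_dist_of_support_subset {X Z : DRV} {S : Finset ℝ} (hX : X.f.support ⊆ S)
    (hZ : Z.f.support ⊆ S) : dK X Z = dist (fun i : S => X.cdf i) (fun i : S => Z.cdf i) := by
  refine le_antisymm (ciSup_le fun t => ?_)
    ((dist_pi_le_iff (dK_nonneg X Z)).2 fun i => abs_sub_cdf_le_dK X Z i)
  by_cases h : (S.filter (· ≤ t)).Nonempty
  · rw [X.cdf_eq_cdf_max' hX h, Z.cdf_eq_cdf_max' hZ h]
    exact dist_le_pi_dist (fun i : S => X.cdf i) (fun i : S => Z.cdf i)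
      ⟨_, (mem_filter.1 (max'_mem _ h)).1⟩
  · rw [not_nonempty_iff_eq_empty] at h
    rw [X.cdf_eq_zero hX h, Z.cdf_eq_zero hZ h, sub_self, abs_zero]
    exact dist_nonneg

namespace DRV

noncomputable def map (r : ℝ → ℝ) (Y : DRV) : DRV where
  f := Y.f.mapDomain r
  nonneg x := by
    rw [Finsupp.mapDomain, Finsupp.sum_apply]
    refine sum_nonneg fun y _ => ?_
    simp only [Finsupp.single_apply]
    split_ifs
    exacts [Y.nonneg y, le_rfl]
  sum_one := by
    rw [Finsupp.sum_mapDomain_index (fun _ => rfl) (fun _ _ _ => rfl)]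
    exact Y.sum_one

variable (r : ℝ → ℝ) (Y : DRV)

lemma support_map_subset : (Y.map r).f.support ⊆ Y.f.support.image r := Finsupp.mapDomain_support

lemma suppSize_map_le : (Y.map r).suppSize ≤ Y.suppSize :=
  (card_le_card (Y.support_map_subset r)).trans card_image_le

lemma cdf_map (t : ℝ) : (Y.map r).cdf t = ∑ y ∈ Y.f.support with r y ≤ t, Y.f y := by
  rw [DRV.cdf, sum_filter, sum_filter]
  exact Finsupp.sum_mapDomain_index (h := fun x p => if x ≤ t then p else 0) (by simp)
    fun _ _ _ => by split_ifs <;> simp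

end DRV

/-- The least point of `S` at or above `y`, or `max S` if there is none. -/
noncomputable def snapUp (S : Finset ℝ) (hS : S.Nonempty) (y : ℝ) : ℝ :=
  (insert (S.max' hS) (S.filter (y ≤ ·))).min' (insert_nonempty _ _)

section snapUp

variable (S : Finset ℝ) (hS : S.Nonempty) (y : ℝ)

lemma snapUp_mem_insert : snapUp S hS y ∈ insert (S.max' hS) (S.filter (y ≤ ·)) := min'_mem _ _

lemma snapUp_mem : snapUp S hS y ∈ S := by
  rcases mem_insert.1 (snapUp_mem_insert S hS y) with h | h
  · exact h ▸ max'_mem S hS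
  · exact (mem_filter.1 h).1

lemma snapUp_le_iff {x : ℝ} (hx : x ∈ S) (hxM : x < S.max' hS) : snapUp S hS y ≤ x ↔ y ≤ x := by
  refine ⟨fun h => ?_, fun h => min'_le _ _ (mem_insert_of_mem (mem_filter.2 ⟨hx, h⟩))⟩
  rcases mem_insert.1 (snapUp_mem_insert S hS y) with hM | hy
  · exact absurd (hM ▸ h) (not_le.2 hxM)
  · exact (mem_filter.1 hy).2.trans h

lemma support_map_snapUp_subset (Y : DRV) : (Y.map (snapUp S hS)).f.support ⊆ S :=
  fun _ hx => by
    obtain ⟨y, -, rfl⟩ := mem_image.1 (Y.support_map_subset _ hx)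
    exact snapUp_mem S hS y

end snapUp

lemma dK_map_snapUp_le (X Y : DRV) :
    dK X (Y.map (snapUp X.f.support X.support_nonempty)) ≤ dK X Y := by
  set S := X.f.support
  set hS := X.support_nonempty
  set Z := Y.map (snapUp S hS)
  have hZ : Z.f.support ⊆ S := support_map_snapUp_subset S hS Y
  rw [dK_eq_dist_of_support_subset subset_rfl hZ, dist_pi_le_iff (dK_nonneg X Y)]
  rintro ⟨x, hx⟩
  rw [Real.dist_eq]
  rcases (le_max' S x hx).lt_or_eq with hlt | hmax
  · have hcdf : Z.cdf x = Y.cdf x := by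
      rw [cdf_map, DRV.cdf]
      exact sum_congr (filter_congr fun y _ => snapUp_le_iff S hS y hx hlt) fun _ _ => rfl
    rw [hcdf]
    exact abs_sub_cdf_le_dK X Y x
  · rw [X.cdf_eq_one fun z hz => (le_max' S z hz).trans_eq hmax.symm,
      Z.cdf_eq_one fun z hz => (le_max' S z (hZ hz)).trans_eq hmax.symm,
      sub_self, abs_zero]
    exact dK_nonneg X Y

namespace DRV

noncomputable def ofWeights {S : Finset ℝ} (g : S → ℝ) (hg : g ∈ stdSimplex ℝ S) : DRV where
  f := (Finsupp.equivFunOnFinite.symm g).extendDomain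
  nonneg x := by
    rw [Finsupp.extendDomain_apply]
    split_ifs
    exacts [hg.1 _, le_rfl]
  sum_one := by
    rw [Finsupp.extendDomain_eq_embDomain_subtype, Finsupp.sum_embDomain,
      Finsupp.sum_fintype _ _ fun _ => rfl]
    exact hg.2

variable {S : Finset ℝ} (g : S → ℝ) (hg : g ∈ stdSimplex ℝ S)

lemma ofWeights_apply (i : S) : (ofWeights g hg).f i = g i := by
  simp [ofWeights, Finsupp.extendDomain_apply]

lemma support_ofWeights_subset : (ofWeights g hg).f.support ⊆ S := fun _ hx =>
  Finsupp.support_extendDomain_subset _ hx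

lemma suppSize_ofWeights_le : (ofWeights g hg).suppSize ≤ #{i | g i ≠ 0} := by
  refine (card_le_card ?_).trans (card_map (Function.Embedding.subtype _)).le
  intro x hx
  have hxS := support_ofWeights_subset g hg hx
  refine mem_map.2 ⟨⟨x, hxS⟩, mem_filter.2 ⟨mem_univ _, ?_⟩, rfl⟩
  rw [← ofWeights_apply g hg]
  exact Finsupp.mem_support_iff.1 hx

variable (W : DRV)

lemma mem_stdSimplex_of_support_subset (hW : W.f.support ⊆ S) :
    (fun i : S => W.f i) ∈ stdSimplex ℝ S := by
  refine ⟨fun i => W.nonneg i, ?_⟩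
  rw [sum_coe_sort S fun x => W.f x, ← W.sum_support_eq_one]
  exact (sum_subset hW fun _ _ hx => Finsupp.notMem_support_iff.1 hx).symm

lemma card_filter_ne_zero_le_suppSize : #{i : S | W.f i ≠ 0} ≤ W.suppSize :=
  card_le_card_of_injOn Subtype.val (fun _ hi => Finsupp.mem_support_iff.2 (mem_filter.1 hi).2)
    fun _ _ _ _ => Subtype.ext

end DRV

noncomputable def cumSum {S : Finset ℝ} (g : S → ℝ) (i : S) : ℝ :=
  ∑ j ∈ univ.filter fun j : S => (j : ℝ) ≤ i, g j

lemma continuous_cumSum {S : Finset ℝ} : Continuous (cumSum (S := S)) :=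
  continuous_pi fun _ => continuous_finsetSum _ fun j _ => continuous_apply j

lemma DRV.cdf_eq_cumSum (W : DRV) {S : Finset ℝ} (hW : W.f.support ⊆ S) (i : S) :
    W.cdf i = cumSum (fun j : S => W.f j) i := by
  rw [W.cdf_eq_sum_of_support_subset hW, cumSum, sum_filter, sum_filter, ← sum_coe_sort]

lemma dK_eq_dist_cumSum {X Z : DRV} (hZ : Z.f.support ⊆ X.f.support) :
    dK X Z = dist (fun i : X.f.support => X.cdf i) (cumSum fun j => Z.f j) := by
  rw [dK_eq_dist_of_support_subset subset_rfl hZ]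
  exact congrArg _ (funext (Z.cdf_eq_cumSum hZ))

/-- For a discrete random variable `X` with finite support and any `m ≥ 1`,
there exists a random variable `X'` with support of size at most `m`
minimizing the Kolmogorov distance to `X` among all random variables with
support size at most `m`; moreover the minimizer can be chosen with support
contained in the support of `X`. -/
theorem exists_optimal_m_approximation (X : DRV) (m : ℕ) (hm : 1 ≤ m) :
    ∃ X' : DRV, X'.suppSize ≤ m ∧
      (∀ Y : DRV, Y.suppSize ≤ m → dK X X' ≤ dK X Y) ∧
      X'.f.support ⊆ X.f.support := by
  set S := X.f.support
  set K := stdSimplex ℝ S ∩ {g | #{i | g i ≠ 0} ≤ m}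
  have hK : IsCompact K :=
    (isCompact_stdSimplex ℝ S).inter_right (isClosed_setOf_card_filter_ne_zero_le m)
  obtain ⟨x₀, hx₀⟩ := X.support_nonempty
  have hKne : K.Nonempty :=
    ⟨Pi.single ⟨x₀, hx₀⟩ 1, single_mem_stdSimplex ℝ _, by simp [Pi.single_apply, filter_eq', hm]⟩
  obtain ⟨g, hgK, hg⟩ :=
    hK.exists_isMinOn hKne (continuous_const.dist continuous_cumSum).continuousOn
  set X' := ofWeights g hgK.1
  have hX' : X'.f.support ⊆ S := support_ofWeights_subset g hgK.1
  refine ⟨X', (suppSize_ofWeights_le g hgK.1).trans hgK.2, fun Y hY => ?_, hX'⟩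
  set Z := Y.map (snapUp S X.support_nonempty)
  have hZ : Z.f.support ⊆ S := support_map_snapUp_subset S _ Y
  calc dK X X' = dist (fun i : S => X.cdf i) (cumSum g) := by
        rw [dK_eq_dist_cumSum hX']
        exact congrArg (fun w => dist _ (cumSum w)) (funext (ofWeights_apply g hgK.1))
    _ ≤ dist (fun i : S => X.cdf i) (cumSum fun j : S => Z.f j) :=
        hg ⟨Z.mem_stdSimplex_of_support_subset hZ,
          (Z.card_filter_ne_zero_le_suppSize).trans ((Y.suppSize_map_le _).trans hY)⟩
    _ = dK X Z := (dK_eq_dist_cumSum hZ).symm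
    _ ≤ dK X Y := dK_map_snapUp_le X Y
end

section
/- Saddleback search correctness: let A be an n × m matrix with real entries that is monotone nondecreasing in both indices, and let P : ℝ → Prop be a monotone predicate (if P(a) and a ≤ b then P(b)). Then the staircase walk starting at the top-right corner (row 1, column m), moving left when P holds at the current entry and down otherwise, visits some entry achieving the minimum value of {A(i,j) : P(A(i,j))} whenever that set is nonempty, using at most n + m steps. -/
open scoped Classical

/-- The staircase (saddleback) walk on an `n × m` matrix `A` (rows and columns
`0`-indexed), starting from position `p` with the given amount of `fuel`:
at entry `(i,j)`, if `P (A i j)` holds the entry is recorded and the walk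
moves left, otherwise it moves down; it stops upon leaving the matrix.  The
returned list is the list of recorded entries. -/
noncomputable def saddleWalk (A : ℕ → ℕ → ℝ) (P : ℝ → Prop) (n : ℕ) :
    ℕ → ℕ × ℕ → List (ℕ × ℕ)
  | 0, _ => []
  | fuel + 1, (i, j) =>
    if i < n then
      if P (A i j) then
        (i, j) :: (if j = 0 then [] else saddleWalk A P n fuel (i, j - 1))
      else saddleWalk A P n fuel (i + 1, j)
    else []

/-!
Fix a minimiser `q` of `A` among the entries satisfying `P`. The walk keeps `q` in the
rectangle below and to the left of its current position: it leaves a column `j` only after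
recording `(i, j)`, which is at most every entry of column `j` below it, and it leaves a row `i`
only when `P (A i j)` fails, so that by monotonicity no entry of row `i` left of `j` satisfies `P`.
Hence the walk records an entry `p` with `A p ≤ A q`, which is again a minimiser. Each step
decreases `(n - i) + j`, so `n + m` steps of fuel suffice.
-/

section SaddleWalk

variable {A : ℕ → ℕ → ℝ} {P : ℝ → Prop} {n m : ℕ}

theorem mem_saddleWalk {fuel i j : ℕ} {p : ℕ × ℕ} (hp : p ∈ saddleWalk A P n fuel (i, j)) :
    p.1 < n ∧ p.2 ≤ j ∧ P (A p.1 p.2) := by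
  induction fuel generalizing i j with
  | zero => simp [saddleWalk] at hp
  | succ fuel ih =>
    rw [saddleWalk] at hp
    split_ifs at hp with hin hPij hj0
    · obtain rfl : p = (i, j) := by simpa using hp
      exact ⟨hin, le_rfl, hPij⟩
    · rcases List.mem_cons.mp hp with rfl | hp
      · exact ⟨hin, le_rfl, hPij⟩
      · obtain ⟨hpn, hpj, hpP⟩ := ih hp
        exact ⟨hpn, by omega, hpP⟩
    · exact ih hp
    · simp at hp

theorem exists_mem_saddleWalk_le
    (hsorted : ∀ i i' j j', i ≤ i' → i' < n → j ≤ j' → j' < m → A i j ≤ A i' j')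
    (hP : ∀ a b : ℝ, P a → a ≤ b → P b) {fuel i j i' j' : ℕ} (hii' : i ≤ i') (hi'n : i' < n)
    (hj'j : j' ≤ j) (hjm : j < m) (hfuel : n - i + j + 1 ≤ fuel) (hPq : P (A i' j')) :
    ∃ p ∈ saddleWalk A P n fuel (i, j), A p.1 p.2 ≤ A i' j' := by
  induction fuel generalizing i j with
  | zero => omega
  | succ fuel ih =>
    have hin : i < n := hii'.trans_lt hi'n
    rw [saddleWalk, if_pos hin]
    by_cases hPij : P (A i j)
    · rw [if_pos hPij]
      rcases hj'j.eq_or_lt with rfl | hj'j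
      · exact ⟨(i, j'), List.mem_cons_self, hsorted i i' j' j' hii' hi'n le_rfl hjm⟩
      · rw [if_neg (by omega)]
        obtain ⟨p, hp, hpq⟩ := ih hii' (j := j - 1) (by omega) (by omega) (by omega)
        exact ⟨p, List.mem_cons_of_mem _ hp, hpq⟩
    · rw [if_neg hPij]
      have hlt : i < i' := by
        refine hii'.lt_of_ne fun hi => hPij ?_
        subst hi
        exact hP _ _ hPq (hsorted i i j' j le_rfl hin hj'j hjm)
      exact ih hlt hj'j hjm (by omega)

end SaddleWalk

theorem saddleback_correct_general
    (n m : ℕ)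
    (A : ℕ → ℕ → ℝ)
    (hsorted : ∀ i i' j j', i ≤ i' → i' < n → j ≤ j' → j' < m →
      A i j ≤ A i' j')
    (P : ℝ → Prop) (hP : ∀ a b : ℝ, P a → a ≤ b → P b)
    (hne : ∃ i < n, ∃ j < m, P (A i j)) :
    ∃ p ∈ saddleWalk A P n (n + m) (0, m - 1),
      p.1 < n ∧ p.2 < m ∧ P (A p.1 p.2) ∧
      ∀ i < n, ∀ j < m, P (A i j) → A p.1 p.2 ≤ A i j := by
  let S := (Finset.range n ×ˢ Finset.range m).filter fun q => P (A q.1 q.2)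
  have hS : S.Nonempty := by
    obtain ⟨i, hi, j, hj, hPij⟩ := hne
    exact ⟨(i, j), by simp [S, hi, hj, hPij]⟩
  obtain ⟨q, hqS, hqmin⟩ := S.exists_min_image (fun q => A q.1 q.2) hS
  simp only [S, Finset.mem_filter, Finset.mem_product, Finset.mem_range] at hqS hqmin
  obtain ⟨⟨hqn, hqm⟩, hPq⟩ := hqS
  obtain ⟨p, hp, hpq⟩ := exists_mem_saddleWalk_le hsorted hP (fuel := n + m) (j := m - 1)
    (Nat.zero_le _) hqn (by omega) (by omega) (by omega) hPq
  obtain ⟨hpn, hpm, hPp⟩ := mem_saddleWalk hp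
  exact ⟨p, hp, hpn, by omega, hPp, fun i hi j hj hPij =>
    hpq.trans (hqmin (i, j) ⟨⟨hi, hj⟩, hPij⟩)⟩

/-- Saddleback search correctness: if `A` is an `n × m` matrix monotone
nondecreasing in both indices, `P` is a monotone predicate, and some entry of
the matrix satisfies `P`, then the staircase walk starting at the top-right
corner with `n + m` steps of fuel records an entry achieving the minimum of
`{A i j : i < n, j < m, P (A i j)}`. -/
theorem saddleback_correct
    (n m : ℕ) (hn : 1 ≤ n) (hm : 1 ≤ m)
    (A : ℕ → ℕ → ℝ)
    (hsorted : ∀ i i' j j', i ≤ i' → i' < n → j ≤ j' → j' < m →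
      A i j ≤ A i' j')
    (P : ℝ → Prop) (hP : ∀ a b : ℝ, P a → a ≤ b → P b)
    (hne : ∃ i < n, ∃ j < m, P (A i j)) :
    ∃ p ∈ saddleWalk A P n (n + m) (0, m - 1),
      p.1 < n ∧ p.2 < m ∧ P (A p.1 p.2) ∧
      ∀ i < n, ∀ j < m, P (A i j) → A p.1 p.2 ≤ A i j :=
  saddleback_correct_general n m A hsorted P hP hne
end
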